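/- Let γ : [0, L] → ℝ² be a closed C² planar curve parametrized by arc length. Then L ≤ (diam γ) · ∫₀^L |γ''(s)| ds. In particular, since L ≥ diam γ, the total curvature ∫₀^L |γ''(s)| ds is at least 1. -/

import Mathlib

open Real MeasureTheory Set

/-!
Integrating `(⟪γ - γ(0), γ'⟫)' = ⟪γ - γ(0), γ''⟫ + ‖γ'‖²` over a closed curve, both boundary
terms vanish, so `L = ∫ ‖γ'‖² = -∫ ⟪γ - γ(0), γ''⟫`. Since `‖γ(s) - γ(0)‖ ≤ diam γ`, the right
side is at most `diam γ · ∫ ‖γ''‖`. A unit-speed curve is `1`-Lipschitz, so `diam γ ≤ L`, which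
gives the lower bound `1` on the total curvature.
-/

open intervalIntegral
open scoped RealInnerProductSpace

section

variable {E : Type*} [NormedAddCommGroup E] [InnerProductSpace ℝ E] {γ : ℝ → E}

theorem integral_inner_sub_deriv_deriv_add_integral_norm_deriv_sq (hγ : ContDiff ℝ 2 γ)
    (p : E) (a b : ℝ) :
    (∫ s in a..b, ⟪γ s - p, deriv (deriv γ) s⟫) + ∫ s in a..b, ‖deriv γ s‖ ^ 2 =
      ⟪γ b - p, deriv γ b⟫ - ⟪γ a - p, deriv γ a⟫ := by
  have hγ' : ContDiff ℝ 1 (deriv γ) := (contDiff_succ_iff_deriv.mp hγ).2.2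
  have hγ'' : Continuous (deriv (deriv γ)) := hγ'.continuous_deriv le_rfl
  have hcont₁ : Continuous fun s ↦ ⟪γ s - p, deriv (deriv γ) s⟫ :=
    (hγ.continuous.sub continuous_const).inner hγ''
  have hcont₂ : Continuous fun s ↦ ‖deriv γ s‖ ^ 2 := hγ'.continuous.norm.pow 2
  rw [← integral_add (hcont₁.intervalIntegrable a b) (hcont₂.intervalIntegrable a b)]
  refine integral_eq_sub_of_hasDerivAt (f := fun s ↦ ⟪γ s - p, deriv γ s⟫) (fun s _ ↦ ?_)
    ((hcont₁.add hcont₂).intervalIntegrable a b)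
  have := ((hγ.differentiable two_ne_zero s).hasDerivAt.sub_const p).inner ℝ
    (hγ'.differentiable one_ne_zero s).hasDerivAt
  rwa [real_inner_self_eq_norm_sq] at this

theorem integral_norm_deriv_sq_eq_neg_integral_inner {a b : ℝ} (hγ : ContDiff ℝ 2 γ)
    (hclosed : γ a = γ b) :
    ∫ s in a..b, ‖deriv γ s‖ ^ 2 = -∫ s in a..b, ⟪γ s - γ a, deriv (deriv γ) s⟫ := by
  have := integral_inner_sub_deriv_deriv_add_integral_norm_deriv_sq hγ (γ a) a b
  rw [← hclosed, sub_self, inner_zero_left, inner_zero_left, sub_zero] at this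
  linarith

theorem norm_integral_inner_sub_le_diam_mul {a b : ℝ} {v : ℝ → E} (hab : a ≤ b)
    (hγ : ContinuousOn γ (Icc a b)) (hv : IntervalIntegrable v volume a b) :
    ‖∫ s in a..b, ⟪γ s - γ a, v s⟫‖ ≤
      Metric.diam (γ '' Icc a b) * ∫ s in a..b, ‖v s‖ := by
  have hbdd : Bornology.IsBounded (γ '' Icc a b) :=
    (isCompact_Icc.image_of_continuousOn hγ).isBounded
  rw [← intervalIntegral.integral_const_mul]
  refine norm_integral_le_of_norm_le hab (ae_of_all _ fun s hs ↦ ?_) (hv.norm.const_mul _)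
  calc ‖⟪γ s - γ a, v s⟫‖ ≤ ‖γ s - γ a‖ * ‖v s‖ := norm_inner_le_norm _ _
    _ ≤ Metric.diam (γ '' Icc a b) * ‖v s‖ := by
      gcongr
      rw [← dist_eq_norm]
      exact Metric.dist_le_diam_of_mem hbdd (mem_image_of_mem γ (Ioc_subset_Icc_self hs))
        (mem_image_of_mem γ (left_mem_Icc.mpr hab))

theorem diam_image_Icc_le_of_norm_deriv_le_one {a b : ℝ} (hab : a ≤ b) (hγ : Differentiable ℝ γ)
    (hspeed : ∀ s ∈ Icc a b, ‖deriv γ s‖ ≤ 1) :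
    Metric.diam (γ '' Icc a b) ≤ b - a := by
  refine Metric.diam_le_of_forall_dist_le (sub_nonneg.mpr hab) ?_
  rintro _ ⟨s, hs, rfl⟩ _ ⟨t, ht, rfl⟩
  calc dist (γ s) (γ t) = ‖γ s - γ t‖ := dist_eq_norm _ _
    _ ≤ 1 * ‖s - t‖ := (convex_Icc a b).norm_image_sub_le_of_norm_deriv_le
        (fun x _ ↦ hγ x) hspeed ht hs
    _ ≤ b - a := by rw [one_mul, ← dist_eq_norm]; exact Real.dist_le_of_mem_Icc hs ht

theorem sub_le_diam_mul_integral_norm_deriv_deriv {a b : ℝ} (hab : a ≤ b)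
    (hγ : ContDiff ℝ 2 γ) (hclosed : γ a = γ b) (hspeed : ∀ s ∈ Icc a b, ‖deriv γ s‖ = 1) :
    b - a ≤ Metric.diam (γ '' Icc a b) * ∫ s in a..b, ‖deriv (deriv γ) s‖ := by
  have hγ'' : Continuous (deriv (deriv γ)) :=
    (contDiff_succ_iff_deriv.mp hγ).2.2.continuous_deriv le_rfl
  calc b - a = ∫ s in a..b, ‖deriv γ s‖ ^ 2 := by
        rw [integral_congr (g := fun _ ↦ (1 : ℝ)) fun s hs ↦ by
          rw [uIcc_of_le hab] at hs; simp [hspeed s hs]]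
        simp
    _ = -∫ s in a..b, ⟪γ s - γ a, deriv (deriv γ) s⟫ :=
        integral_norm_deriv_sq_eq_neg_integral_inner hγ hclosed
    _ ≤ ‖∫ s in a..b, ⟪γ s - γ a, deriv (deriv γ) s⟫‖ := neg_le_abs _
    _ ≤ _ := norm_integral_inner_sub_le_diam_mul hab hγ.continuous.continuousOn
        (hγ''.intervalIntegrable a b)

end

/-- For a closed C² planar curve `γ : [0,L] → ℝ²` parametrized by arc length,
`L ≤ (diam γ) · ∫₀^L |γ''|`, and in particular the total curvature is at least `1`. -/
theorem length_le_diam_mul_total_curvature (L : ℝ) (hL : 0 < L)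
    (γ : ℝ → EuclideanSpace ℝ (Fin 2)) (hγ : ContDiff ℝ 2 γ)
    (hclosed : γ 0 = γ L) (harc : ∀ s ∈ Set.Icc (0:ℝ) L, ‖deriv γ s‖ = 1) :
    L ≤ Metric.diam (γ '' Set.Icc (0:ℝ) L) * ∫ s in (0:ℝ)..L, ‖deriv (deriv γ) s‖ ∧
    1 ≤ ∫ s in (0:ℝ)..L, ‖deriv (deriv γ) s‖ := by
  have hmain := sub_le_diam_mul_integral_norm_deriv_deriv hL.le hγ hclosed harc
  rw [sub_zero] at hmain
  refine ⟨hmain, ?_⟩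
  have hdiam : Metric.diam (γ '' Icc 0 L) ≤ L := by
    simpa using diam_image_Icc_le_of_norm_deriv_le_one hL.le
      (hγ.differentiable two_ne_zero) fun s hs ↦ (harc s hs).le
  have hcurv : 0 ≤ ∫ s in (0:ℝ)..L, ‖deriv (deriv γ) s‖ :=
    integral_nonneg hL.le fun _ _ ↦ norm_nonneg _
  refine le_of_mul_le_mul_left ?_ hL
  calc L * 1 = L := mul_one L
    _ ≤ Metric.diam (γ '' Icc 0 L) * ∫ s in (0:ℝ)..L, ‖deriv (deriv γ) s‖ := hmain
    _ ≤ L * ∫ s in (0:ℝ)..L, ‖deriv (deriv γ) s‖ := by gcongr
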